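/- arXiv:1808.09631 — 2 statements merged into one kernel-verified Lean document; each statement's English description precedes it below -/
import Mathlib

section
/- Let α > 0 and let f : Ḡ×I'×I → ℝ be continuous, continuously differentiable in its second (primed) variable E', with ∂f/∂E' α-Hölder in E' uniformly on Ḡ×I'×I (f ∈ C(Ḡ×I, C^{1+α}(I'))). Then for every x ∈ Ḡ and E ∈ [E₀,E_m) both Hadamard finite part integrals below exist and p.f.∫_E^{E_m} f(x,E',E)/(E'−E)² dE' = p.f.∫_E^{E_m} (∂f/∂E')(x,E',E)/(E'−E) dE' + (∂f/∂E')(x,E,E) − f(x,E_m,E)/(E_m−E). -/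
open MeasureTheory Filter Set
open scoped Topology

noncomputable section

abbrev E3 : Type := EuclideanSpace ℝ (Fin 3)

/-- Hadamard finite part of order 1 with upper limit `b`. -/
def HasPF1Upper (g : ℝ → ℝ) (x b L : ℝ) : Prop :=
  Tendsto (fun ε : ℝ => (∫ t in (x + ε)..b, g t / (t - x)) + g x * Real.log ε)
    (𝓝[>] (0 : ℝ)) (𝓝 L)

/-- Hadamard finite part of order 2 with upper limit `b`, `d` being the right derivative
`g'(x⁺)`. -/
def HasPF2Upper (g : ℝ → ℝ) (d x b L : ℝ) : Prop :=
  Tendsto (fun ε : ℝ => (∫ t in (x + ε)..b, g t / (t - x) ^ 2) + d * Real.log ε - g x / ε)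
    (𝓝[>] (0 : ℝ)) (𝓝 L)

/-! Subtracting `g x` turns the order-1 finite part into an ordinary integral: the Hölder bound
makes `(g t - g x) / (t - x) = O((t - x) ^ (α - 1))` integrable, and
`∫_{x+ε}^b dt / (t - x) = log (b - x) - log ε` absorbs the logarithm. The order-2 identity then
follows by integrating by parts against `-1 / (t - x)` on `[x + ε, b]`: the boundary term at
`x + ε`, minus `g x / ε`, is the difference quotient of `g` at `x`, which tends to `g' x`. -/

lemma tendsto_const_add_nhdsGT_zero (x : ℝ) : Tendsto (x + ·) (𝓝[>] (0 : ℝ)) (𝓝[>] x) :=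
  tendsto_nhdsWithin_of_tendsto_nhds_of_eventually_within _
    ((continuous_const_add x).tendsto' 0 x (add_zero x) |>.mono_left nhdsWithin_le_nhds)
    (eventually_nhdsWithin_of_forall fun _ hε => lt_add_of_pos_right x hε)

lemma HasDerivWithinAt.tendsto_slope_zero_right {g : ℝ → ℝ} {d x : ℝ}
    (hg : HasDerivWithinAt g d (Ioi x) x) :
    Tendsto (fun ε => (g (x + ε) - g x) / ε) (𝓝[>] 0) (𝓝 d) := by
  have hslope := (hasDerivWithinAt_iff_tendsto_slope' (lt_irrefl x)).1 hg
  refine (hslope.comp (tendsto_const_add_nhdsGT_zero x)).congr fun ε => ?_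
  simp [slope_def_field, div_eq_mul_inv]

lemma tendsto_integral_const_add_left_nhdsGT_zero {h : ℝ → ℝ} {x b : ℝ} (hxb : x < b)
    (hh : IntervalIntegrable h volume x b) :
    Tendsto (fun ε => ∫ t in (x + ε)..b, h t) (𝓝[>] 0) (𝓝 (∫ t in x..b, h t)) := by
  have hcont := intervalIntegral.continuousOn_primitive_interval_left
    (by rwa [intervalIntegrable_iff'] at hh) x left_mem_uIcc
  refine hcont.tendsto.comp ((tendsto_const_add_nhdsGT_zero x).mono_right ?_)
  exact nhdsWithin_le_of_mem (mem_of_superset (Icc_mem_nhdsGT hxb) Icc_subset_uIcc)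

lemma intervalIntegrable_div_sub_of_holder {g : ℝ → ℝ} {x b C α : ℝ} (hα : 0 < α)
    (hxb : x ≤ b) (hg : ContinuousOn g (Ioc x b))
    (hH : ∀ t ∈ Ioc x b, |g t - g x| ≤ C * |t - x| ^ α) :
    IntervalIntegrable (fun t => (g t - g x) / (t - x)) volume x b := by
  rw [intervalIntegrable_iff_integrableOn_Ioc_of_le hxb]
  have hdom : IntegrableOn (fun t => C * (t - x) ^ (α - 1)) (Ioc x b) := by
    rw [← intervalIntegrable_iff_integrableOn_Ioc_of_le hxb]
    have := (intervalIntegral.intervalIntegrable_rpow' (r := α - 1) (a := 0) (b := b - x)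
      (by linarith)).comp_sub_right x
    simpa using this.const_mul C
  have hcont : ContinuousOn (fun t => (g t - g x) / (t - x)) (Ioc x b) :=
    (hg.sub continuousOn_const).div (continuousOn_id.sub continuousOn_const)
      fun t ht => (sub_pos.2 ht.1).ne'
  refine hdom.mono' (hcont.aestronglyMeasurable measurableSet_Ioc) ?_
  refine (ae_restrict_iff' measurableSet_Ioc).2 (ae_of_all _ fun t ht => ?_)
  have htx : 0 < t - x := sub_pos.2 ht.1
  rw [Real.norm_eq_abs, abs_div, abs_of_pos htx, div_le_iff₀ htx, mul_assoc,
    ← Real.rpow_add_one htx.ne', sub_add_cancel, ← abs_of_pos htx]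
  exact hH t ht

lemma integral_div_sub_eq {g : ℝ → ℝ} {x a b : ℝ} (hxa : x < a) (hab : a ≤ b)
    (hg : ContinuousOn g (Icc a b)) :
    ∫ t in a..b, g t / (t - x) =
      (∫ t in a..b, (g t - g x) / (t - x)) + g x * (Real.log (b - x) - Real.log (a - x)) := by
  have hne : ∀ t ∈ Icc a b, t - x ≠ 0 := fun t ht => (sub_pos.2 (hxa.trans_le ht.1)).ne'
  have hinv : ContinuousOn (fun t => (t - x)⁻¹) (Icc a b) :=
    (continuousOn_id.sub continuousOn_const).inv₀ hne
  have hquot : ContinuousOn (fun t => (g t - g x) / (t - x)) (Icc a b) :=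
    (hg.sub continuousOn_const).div (continuousOn_id.sub continuousOn_const) hne
  have hsplit : (fun t => g t / (t - x)) = fun t => (g t - g x) / (t - x) + g x * (t - x)⁻¹ := by
    funext t; ring
  rw [hsplit, intervalIntegral.integral_add (hquot.intervalIntegrable_of_Icc hab)
    ((hinv.intervalIntegrable_of_Icc hab).const_mul _), intervalIntegral.integral_const_mul,
    intervalIntegral.integral_comp_sub_right (fun t => t⁻¹),
    integral_inv_of_pos (sub_pos.2 hxa) (sub_pos.2 (hxa.trans_le hab)),
    Real.log_div (sub_pos.2 (hxa.trans_le hab)).ne' (sub_pos.2 hxa).ne']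

lemma integral_div_sub_sq_eq {g g' : ℝ → ℝ} {x a b : ℝ} (hxa : x < a) (hab : a ≤ b)
    (hg : ∀ t ∈ Icc a b, HasDerivWithinAt g (g' t) (Icc a b) t)
    (hg' : IntervalIntegrable g' volume a b) :
    ∫ t in a..b, g t / (t - x) ^ 2 =
      (∫ t in a..b, g' t / (t - x)) + g a / (a - x) - g b / (b - x) := by
  have hne : ∀ t ∈ Icc a b, t - x ≠ 0 := fun t ht => (sub_pos.2 (hxa.trans_le ht.1)).ne'
  have hv : ∀ t ∈ Icc a b,
      HasDerivWithinAt (fun t => -(t - x)⁻¹) (((t - x) ^ 2)⁻¹) (Icc a b) t := by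
    intro t ht
    exact (((hasDerivAt_id t).sub_const x).inv (hne t ht)).neg.hasDerivWithinAt.congr_deriv
      (by rw [neg_div, neg_neg, one_div, id])
  have hv' : IntervalIntegrable (fun t => ((t - x) ^ 2)⁻¹) volume a b :=
    (((continuousOn_id.sub continuousOn_const).pow 2).inv₀
      fun t ht => pow_ne_zero 2 (hne t ht)).intervalIntegrable_of_Icc hab
  have hparts := intervalIntegral.integral_mul_deriv_eq_deriv_mul_of_hasDerivWithinAt
    (u := g) (by rwa [uIcc_of_le hab]) (by rwa [uIcc_of_le hab]) hg' hv'
  simp only [mul_neg, intervalIntegral.integral_neg, ← div_eq_mul_inv] at hparts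
  rw [hparts]
  ring

theorem hasPF1Upper_of_holder {g : ℝ → ℝ} {x b C α : ℝ} (hα : 0 < α) (hxb : x < b)
    (hg : ContinuousOn g (Icc x b)) (hH : ∀ t ∈ Ioc x b, |g t - g x| ≤ C * |t - x| ^ α) :
    HasPF1Upper g x b ((∫ t in x..b, (g t - g x) / (t - x)) + g x * Real.log (b - x)) := by
  have hint := intervalIntegrable_div_sub_of_holder hα hxb.le (hg.mono Ioc_subset_Icc_self) hH
  refine ((tendsto_integral_const_add_left_nhdsGT_zero hxb hint).add_const _).congr' ?_
  filter_upwards [Ioo_mem_nhdsGT (sub_pos.2 hxb)] with ε hε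
  rw [integral_div_sub_eq (lt_add_of_pos_right x hε.1) (by linarith [hε.2])
    (hg.mono (Icc_subset_Icc_left (by linarith [hε.1]))), add_sub_cancel_left]
  ring

theorem HasPF1Upper.hasPF2Upper {g g' : ℝ → ℝ} {x b L : ℝ} (hxb : x < b)
    (hg : ∀ t ∈ Icc x b, HasDerivWithinAt g (g' t) (Icc x b) t)
    (hg' : ContinuousOn g' (Icc x b)) (hL : HasPF1Upper g' x b L) :
    HasPF2Upper g (g' x) x b (L + g' x - g b / (b - x)) := by
  have hslope := ((hg x (left_mem_Icc.2 hxb.le)).mono_of_mem_nhdsWithin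
    (Icc_mem_nhdsGT hxb)).tendsto_slope_zero_right
  refine ((hL.add hslope).sub_const _).congr' ?_
  filter_upwards [Ioo_mem_nhdsGT (sub_pos.2 hxb)] with ε hε
  have hsub : Icc (x + ε) b ⊆ Icc x b := Icc_subset_Icc_left (by linarith [hε.1])
  have hεb : x + ε ≤ b := by linarith [hε.2]
  rw [integral_div_sub_sq_eq (lt_add_of_pos_right x hε.1) hεb
    (fun t ht => (hg t (hsub ht)).mono hsub) ((hg'.mono hsub).intervalIntegrable_of_Icc hεb),
    add_sub_cancel_left]
  field_simp
  ring

theorem stmt4_general (G : Set E3)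
    (E₀ Em α : ℝ) (hα : 0 < α)
    (f f' : E3 → ℝ → ℝ → ℝ) (C : ℝ)
    (hf' : ContinuousOn (fun p : E3 × ℝ × ℝ => f' p.1 p.2.1 p.2.2)
      (closure G ×ˢ Set.Icc E₀ Em ×ˢ Set.Icc E₀ Em))
    (hderiv : ∀ x ∈ closure G, ∀ E ∈ Set.Icc E₀ Em, ∀ E' ∈ Set.Icc E₀ Em,
      HasDerivWithinAt (fun s => f x s E) (f' x E' E) (Set.Icc E₀ Em) E')
    (hHolder : ∀ x ∈ closure G, ∀ E ∈ Set.Icc E₀ Em, ∀ E₁' ∈ Set.Icc E₀ Em,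
      ∀ E₂' ∈ Set.Icc E₀ Em, |f' x E₁' E - f' x E₂' E| ≤ C * |E₁' - E₂'| ^ α) :
    ∀ x ∈ closure G, ∀ E ∈ Set.Ico E₀ Em, ∃ L₁ : ℝ,
      HasPF1Upper (fun E' => f' x E' E) E Em L₁ ∧
      HasPF2Upper (fun E' => f x E' E) (f' x E E) E Em
        (L₁ + f' x E E - f x Em E / (Em - E)) := by
  intro x hx E hE
  have hEI : E ∈ Icc E₀ Em := Ico_subset_Icc_self hE
  have hsub : Icc E Em ⊆ Icc E₀ Em := Icc_subset_Icc_left hE.1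
  have hg' : ContinuousOn (fun E' => f' x E' E) (Icc E Em) :=
    hf'.comp (by fun_prop : Continuous fun t : ℝ => (x, t, E)).continuousOn
      fun _ ht => ⟨hx, hsub ht, hEI⟩
  have hL := hasPF1Upper_of_holder hα hE.2 hg'
    fun t ht => hHolder x hx E hEI t (hsub (Ioc_subset_Icc_self ht)) E hEI
  have hL2 := hL.hasPF2Upper hE.2
    (fun t ht => (hderiv x hx E hEI t (hsub ht)).mono hsub) hg'
  exact ⟨_, hL, hL2⟩

/-- for `f ∈ C(Ḡ×I, C^{1+α}(I'))` (with `f' = ∂f/∂E'` continuous and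
`α`-Hölder in `E'` uniformly), for `x ∈ Ḡ`, `E ∈ [E₀,E_m)` both finite parts exist and
`p.f.∫_E^{E_m} f(x,E',E)/(E'−E)² dE'
 = p.f.∫_E^{E_m} (∂f/∂E')(x,E',E)/(E'−E) dE' + (∂f/∂E')(x,E,E) − f(x,E_m,E)/(E_m−E)`. -/
theorem stmt4 (G : Set E3) (hGopen : IsOpen G) (hGbdd : Bornology.IsBounded G)
    (E₀ Em α : ℝ) (hE₀ : 0 ≤ E₀) (hI : E₀ < Em) (hα : 0 < α)
    (f f' : E3 → ℝ → ℝ → ℝ) (C : ℝ)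
    (hf : ContinuousOn (fun p : E3 × ℝ × ℝ => f p.1 p.2.1 p.2.2)
      (closure G ×ˢ Set.Icc E₀ Em ×ˢ Set.Icc E₀ Em))
    (hf' : ContinuousOn (fun p : E3 × ℝ × ℝ => f' p.1 p.2.1 p.2.2)
      (closure G ×ˢ Set.Icc E₀ Em ×ˢ Set.Icc E₀ Em))
    (hderiv : ∀ x ∈ closure G, ∀ E ∈ Set.Icc E₀ Em, ∀ E' ∈ Set.Icc E₀ Em,
      HasDerivWithinAt (fun s => f x s E) (f' x E' E) (Set.Icc E₀ Em) E')
    (hHolder : ∀ x ∈ closure G, ∀ E ∈ Set.Icc E₀ Em, ∀ E₁' ∈ Set.Icc E₀ Em,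
      ∀ E₂' ∈ Set.Icc E₀ Em, |f' x E₁' E - f' x E₂' E| ≤ C * |E₁' - E₂'| ^ α) :
    ∀ x ∈ closure G, ∀ E ∈ Set.Ico E₀ Em, ∃ L₁ : ℝ,
      HasPF1Upper (fun E' => f' x E' E) E Em L₁ ∧
      HasPF2Upper (fun E' => f x E' E) (f' x E E) E Em
        (L₁ + f' x E E - f x Em E / (Em - E)) :=
  stmt4_general G E₀ Em α hα f f' C hf' hderiv hHolder
end
end

section
/- Let E₀ > 0, let σ̂₁ : Ḡ×I'×I → ℝ be continuous and C¹ in (E',E) with continuous derivatives, and let ψ : Ḡ×S×I → ℝ be continuous and Lipschitz in (ω,E) uniformly in x, with norm ‖ψ‖ := sup|ψ| + (uniform Lipschitz seminorm in (ω,E)). For κ > 1 define the truncated first-order Hadamard operator (K_{1,1,κ}ψ)(x,ω,E) := p.f.∫_E^{κE} (1/(E'−E))·σ̂₁(x,E',E)·( ∫_0^{2π} ψ(x, γ(E',E,ω)(s), E') ds ) dE' and its approximation (K̃_{1,1,κ}ψ)(x,ω,E) := 2π·log(κE−E)·σ̂₁(x,E,E)·ψ(x,ω,E). Then there exists a constant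 C, independent of ψ, κ, x, ω, E, such that for all (x,ω,E) ∈ Ḡ×S×I with κE ≤ E_m: |(K_{1,1,κ}ψ)(x,ω,E) − (K̃_{1,1,κ}ψ)(x,ω,E)| ≤ C·‖ψ‖·(κ−1)^{1/2}. -/
/-!
Write `g(E') = σ̂₁(x,E',E) ∫₀^{2π} ψ(x, γ(E',E,ω)(s), E') ds`. Since `γ(E,E,ω) ≡ ω`,
`g(E) = 2π σ̂₁(x,E,E) ψ(x,ω,E)`, so subtracting `g(E)` in the finite part shows
`K_{1,1,κ}ψ − K̃_{1,1,κ}ψ = ∫_E^{κE} (g(E') − g(E)) / (E' − E) dE'`.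
The circle `γ(E',E,ω)` lies within `O(√(E' − E))` of `ω`, so the Lipschitz bound on `ψ` and
the `C¹` bound on `σ̂₁` (uniform in `x` by compactness of `Ḡ × I' × I`) give
`|g(E') − g(E)| ≤ ‖ψ‖ (A (E' − E) + B √(E' − E))`. The integrand is therefore `O((E' − E)^{-1/2})`,
and its integral is `O(√(κE − E)) = O(√(κ − 1))`.
-/

open MeasureTheory Filter Set Metric
open scoped Topology Real

noncomputable section

/-- The vector `(a,b,c) ∈ ℝ³` as an element of `EuclideanSpace ℝ (Fin 3)`. -/
def vec3 (a b c : ℝ) : E3 := (EuclideanSpace.equiv (Fin 3) ℝ).symm ![a, b, c]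

/-- The third standard basis vector `e₃`. -/
def e₃ : E3 := EuclideanSpace.single 2 1

/-- `μ(E',E) = √( E(E'+2) / (E'(E+2)) )`. -/
def mu (E' E : ℝ) : ℝ := Real.sqrt (E * (E' + 2) / (E' * (E + 2)))

/-- The parametrization `γ(E',E,ω)(s)` of the circle `{ω' ∈ S : ω'·ω = μ(E',E)}`. -/
def gam (R : E3 → (E3 ≃ₗᵢ[ℝ] E3)) (E' E : ℝ) (ω : E3) (s : ℝ) : E3 :=
  R ω (vec3 (Real.sqrt (1 - mu E' E ^ 2) * Real.cos s)
        (Real.sqrt (1 - mu E' E ^ 2) * Real.sin s) (mu E' E))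

section FinitePart

variable {g : ℝ → ℝ} {a b A B : ℝ}

/-- The counterterm `g a * log ε` cancels against
`∫_{a+ε}^b g a / (t - a) dt = g a * (log (b - a) - log ε)`. -/
theorem hasPF1Upper_of_intervalIntegrable (hab : a < b)
    (hg : IntervalIntegrable (fun t => (g t - g a) / (t - a)) volume a b) :
    HasPF1Upper g a b ((∫ t in a..b, (g t - g a) / (t - a)) + g a * Real.log (b - a)) := by
  set h := fun t => (g t - g a) / (t - a)
  have hsplit : (fun ε => (∫ t in (a + ε)..b, h t) + g a * Real.log (b - a)) =ᶠ[𝓝[>] 0]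
      fun ε => (∫ t in (a + ε)..b, g t / (t - a)) + g a * Real.log ε := by
    filter_upwards [Ioo_mem_nhdsGT (sub_pos.mpr hab)] with ε ⟨hε, hεb⟩
    have hinv : IntervalIntegrable (fun t => (t - a)⁻¹) volume (a + ε) b := by
      refine ContinuousOn.intervalIntegrable (ContinuousOn.inv₀ (by fun_prop) fun t ht => ?_)
      rw [uIcc_of_le (by linarith)] at ht
      linarith [ht.1]
    have hlog : ∫ t in (a + ε)..b, (t - a)⁻¹ = Real.log (b - a) - Real.log ε := by
      rw [intervalIntegral.integral_comp_sub_right (fun u => u⁻¹), add_sub_cancel_left,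
        integral_inv_of_pos hε (by linarith), Real.log_div (by linarith) hε.ne']
    have hh : IntervalIntegrable h volume (a + ε) b :=
      hg.mono_set <| uIcc_subset_uIcc (by rw [uIcc_of_le hab.le]; constructor <;> linarith)
        right_mem_uIcc
    rw [show (fun t => g t / (t - a)) = fun t => h t + g a * (t - a)⁻¹ from
        funext fun t => by simp only [h]; ring,
      intervalIntegral.integral_add hh (hinv.const_mul _), intervalIntegral.integral_const_mul,
      hlog]
    ring
  have hprim : ContinuousWithinAt (fun u => ∫ t in u..b, h t) (Ioi a) a := by
    have hon : IntegrableOn h (uIcc a b) := by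
      rw [uIcc_of_le hab.le, integrableOn_Icc_iff_integrableOn_Ioc]
      exact (intervalIntegrable_iff_integrableOn_Ioc_of_le hab.le).mp hg
    have := (intervalIntegral.continuousOn_primitive_interval_left hon a left_mem_uIcc).mono
      (Ioc_subset_Icc_self.trans_eq (uIcc_of_le hab.le).symm)
    rwa [ContinuousWithinAt, nhdsWithin_Ioc_eq_nhdsGT hab] at this
  have hshift : Tendsto (a + ·) (𝓝[>] 0) (𝓝[>] a) := by
    have := (map_add_left_nhdsGT (c := a) (a := (0 : ℝ))).le
    rwa [add_zero] at this
  exact ((hprim.tendsto.comp hshift).add_const _).congr' hsplit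

lemma integral_sub_rpow_neg_half :
    ∫ t in a..b, (t - a) ^ (-(1 / 2) : ℝ) = 2 * √(b - a) := by
  rw [intervalIntegral.integral_comp_sub_right (fun u => u ^ (-(1 / 2) : ℝ)), sub_self,
    integral_rpow (Or.inl (by norm_num)), Real.sqrt_eq_rpow]
  norm_num
  ring

lemma abs_div_sub_le_of_abs_sub_le {t : ℝ} (ht : a < t)
    (hgt : |g t - g a| ≤ A * (t - a) + B * √(t - a)) :
    |(g t - g a) / (t - a)| ≤ A + B * (t - a) ^ (-(1 / 2) : ℝ) := by
  have hu : 0 < t - a := sub_pos.mpr ht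
  have hsqrt : √(t - a) * √(t - a) = t - a := Real.mul_self_sqrt hu.le
  rw [abs_div, abs_of_pos hu, div_le_iff₀ hu, Real.rpow_neg hu.le, ← Real.sqrt_eq_rpow]
  have : B * (√(t - a))⁻¹ * (t - a) = B * √(t - a) := by
    calc B * (√(t - a))⁻¹ * (t - a) = B * ((√(t - a))⁻¹ * (√(t - a) * √(t - a))) := by
          rw [hsqrt]; ring
      _ = B * √(t - a) := by rw [inv_mul_cancel_left₀ (Real.sqrt_pos.mpr hu).ne']
  nlinarith

theorem exists_hasPF1Upper_abs_sub_log_le (hab : a < b) (hg : ContinuousOn g (Icc a b))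
    (hgA : ∀ t ∈ Ioc a b, |g t - g a| ≤ A * (t - a) + B * √(t - a)) :
    ∃ L, HasPF1Upper g a b L ∧ |L - g a * Real.log (b - a)| ≤ A * (b - a) + 2 * B * √(b - a) := by
  have hbound : ∀ t ∈ Ioc a b, ‖(g t - g a) / (t - a)‖ ≤ A + B * (t - a) ^ (-(1 / 2) : ℝ) :=
    fun t ht => abs_div_sub_le_of_abs_sub_le ht.1 (hgA t ht)
  have hrpow : IntervalIntegrable (fun t => (t - a) ^ (-(1 / 2) : ℝ)) volume a b := by
    simpa using (intervalIntegral.intervalIntegrable_rpow' (a := 0) (b := b - a)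
      (r := -(1 / 2)) (by norm_num)).comp_sub_right a
  have hmaj : IntervalIntegrable (fun t => A + B * (t - a) ^ (-(1 / 2) : ℝ)) volume a b :=
    intervalIntegrable_const.add (hrpow.const_mul B)
  have hslope : ContinuousOn (fun t => (g t - g a) / (t - a)) (Ioc a b) :=
    ((hg.mono Ioc_subset_Icc_self).sub continuousOn_const).div (by fun_prop)
      fun t ht => sub_ne_zero.mpr ht.1.ne'
  have hint : IntervalIntegrable (fun t => (g t - g a) / (t - a)) volume a b := by
    refine hmaj.mono_fun' ?_ ?_ <;> rw [uIoc_of_le hab.le]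
    · exact hslope.aestronglyMeasurable measurableSet_Ioc
    · exact (ae_restrict_iff' measurableSet_Ioc).mpr (ae_of_all _ hbound)
  refine ⟨_, hasPF1Upper_of_intervalIntegrable hab hint, ?_⟩
  rw [add_sub_cancel_right, ← Real.norm_eq_abs]
  calc ‖∫ t in a..b, (g t - g a) / (t - a)‖
      ≤ ∫ t in a..b, (A + B * (t - a) ^ (-(1 / 2) : ℝ)) :=
        intervalIntegral.norm_integral_le_of_norm_le hab.le (ae_of_all _ hbound) hmaj
    _ = A * (b - a) + 2 * B * √(b - a) := by
        rw [intervalIntegral.integral_add intervalIntegrable_const (hrpow.const_mul B),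
          intervalIntegral.integral_const, intervalIntegral.integral_const_mul,
          integral_sub_rpow_neg_half, smul_eq_mul]
        ring

end FinitePart

theorem exists_lipschitzOnWith_of_continuousOn_iteratedFDerivWithin {X F G : Type*}
    [TopologicalSpace X] [NormedAddCommGroup F] [NormedSpace ℝ F] [NormedAddCommGroup G]
    [NormedSpace ℝ G] {f : X → F → G} {K : Set X} {s : Set F} (hK : IsCompact K)
    (hs : IsCompact s) (hsc : Convex ℝ s) (hsu : UniqueDiffOn ℝ s)
    (hf : ∀ x ∈ K, DifferentiableOn ℝ (f x) s)
    (hf' : ContinuousOn (fun p : X × F => iteratedFDerivWithin ℝ 1 (f p.1) s p.2) (K ×ˢ s)) :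
    ∃ L : NNReal, ∀ x ∈ K, LipschitzOnWith L (f x) s := by
  obtain ⟨C, hC⟩ := (hK.prod hs).exists_bound_of_continuousOn hf'
  refine ⟨C.toNNReal, fun x hx => hsc.lipschitzOnWith_of_nnnorm_fderivWithin_le (hf x hx)
    fun y hy => ?_⟩
  rw [← NNReal.coe_le_coe, coe_nnnorm, ← norm_iteratedFDerivWithin_one _ (hsu y hy)]
  exact (hC (x, y) ⟨hx, hy⟩).trans (Real.le_coe_toNNReal C)

lemma mul_sub_one_le_mul_sqrt {E κ c : ℝ} (hE : 0 ≤ E) (hκ : 1 ≤ κ) (hc : κ * E ≤ c) :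
    E * (κ - 1) ≤ c * √(κ - 1) := by
  have hw : √(κ - 1) * √(κ - 1) = κ - 1 := Real.mul_self_sqrt (by linarith)
  have hEw : E * √(κ - 1) ≤ c := by
    refine le_of_pow_le_pow_left₀ two_ne_zero (by nlinarith) ?_
    calc (E * √(κ - 1)) ^ 2 = E * (E * (κ - 1)) := by rw [mul_pow, sq, sq, hw]; ring
      _ ≤ c * c := mul_le_mul (by nlinarith) (by nlinarith) (by nlinarith) (by nlinarith)
      _ = c ^ 2 := (sq c).symm
  calc E * (κ - 1) = E * √(κ - 1) * √(κ - 1) := by rw [mul_assoc, hw]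
    _ ≤ c * √(κ - 1) := by gcongr

lemma mul_sub_add_sqrt_le {E κ c A B : ℝ} (hE : 0 < E) (hκ : 1 ≤ κ) (hc : κ * E ≤ c)
    (hA : 0 ≤ A) :
    A * (κ * E - E) + 2 * (B * √(2 / E)) * √(κ * E - E) ≤ (A * c + 2 * √2 * B) * √(κ - 1) := by
  have hsqrt : √(2 / E) * √(E * (κ - 1)) = √2 * √(κ - 1) := by
    rw [← Real.sqrt_mul (by positivity), ← Real.sqrt_mul zero_le_two]
    congr 1
    field_simp
  calc A * (κ * E - E) + 2 * (B * √(2 / E)) * √(κ * E - E)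
      = A * (E * (κ - 1)) + 2 * B * (√(2 / E) * √(E * (κ - 1))) := by ring_nf
    _ ≤ A * (c * √(κ - 1)) + 2 * B * (√2 * √(κ - 1)) := by
        rw [hsqrt]
        exact add_le_add_left (mul_le_mul_of_nonneg_left (mul_sub_one_le_mul_sqrt hE.le hκ hc) hA) _
    _ = (A * c + 2 * √2 * B) * √(κ - 1) := by ring

lemma vec3_apply (a b c : ℝ) (i : Fin 3) : vec3 a b c i = ![a, b, c] i := rfl

lemma e₃_eq_vec3 : e₃ = vec3 0 0 1 := by
  ext i
  fin_cases i <;> simp [vec3_apply, e₃]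

lemma norm_vec3 (a b c : ℝ) : ‖vec3 a b c‖ = √(a ^ 2 + b ^ 2 + c ^ 2) := by
  simp [EuclideanSpace.norm_eq, Fin.sum_univ_three, vec3_apply, sq_abs, add_assoc]

lemma vec3_sub (a b c a' b' c' : ℝ) :
    vec3 a b c - vec3 a' b' c' = vec3 (a - a') (b - b') (c - c') := by
  ext i
  fin_cases i <;> simp [vec3_apply]

lemma ContinuousOn.vec3 {α : Type*} [TopologicalSpace α] {f g h : α → ℝ} {s : Set α}
    (hf : ContinuousOn f s) (hg : ContinuousOn g s) (hh : ContinuousOn h s) :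
    ContinuousOn (fun a => vec3 (f a) (g a) (h a)) s :=
  (EuclideanSpace.equiv (Fin 3) ℝ).symm.continuous.comp_continuousOn <| continuousOn_pi.mpr
    fun i => by fin_cases i <;> simpa

lemma mu_self {E : ℝ} (hE : 0 < E) : mu E E = 1 := by
  rw [mu, div_self (mul_pos hE (by linarith)).ne', Real.sqrt_one]

lemma one_sub_mu_sq {t E : ℝ} (ht : 0 < t) (hE : 0 < E) :
    1 - mu t E ^ 2 = 2 * (t - E) / (t * (E + 2)) := by
  rw [mu, Real.sq_sqrt (div_pos (mul_pos hE (by linarith)) (mul_pos ht (by linarith))).le]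
  field_simp
  ring

lemma mu_le_one {t E : ℝ} (hE : 0 < E) (hEt : E ≤ t) : mu t E ≤ 1 :=
  Real.sqrt_le_one.mpr <| (div_le_one (mul_pos (hE.trans_le hEt) (by linarith))).mpr (by nlinarith)

lemma continuousOn_mu {E : ℝ} (hE : 0 < E) : ContinuousOn (fun t => mu t E) (Ioi 0) :=
  Real.continuous_sqrt.comp_continuousOn <|
    ContinuousOn.div (by fun_prop) (by fun_prop) fun t (ht : 0 < t) =>
      (mul_pos ht (by linarith)).ne'

section gam

variable (R : E3 → (E3 ≃ₗᵢ[ℝ] E3)) {t E : ℝ} (ω : E3) (s : ℝ)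

lemma norm_gam (hE : 0 < E) (hEt : E ≤ t) : ‖gam R t E ω s‖ = 1 := by
  have hμ : mu t E ^ 2 ≤ 1 := pow_le_one₀ (Real.sqrt_nonneg _) (mu_le_one hE hEt)
  rw [gam, (R ω).norm_map, norm_vec3, mul_pow, mul_pow, Real.sq_sqrt (by linarith),
    ← mul_add, Real.cos_sq_add_sin_sq, mul_one, sub_add_cancel, Real.sqrt_one]

variable {R}

lemma gam_self (hR : ∀ ω : E3, ‖ω‖ = 1 → R ω e₃ = ω) (hE : 0 < E) (hω : ‖ω‖ = 1) :
    gam R E E ω s = ω := by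
  simpa [gam, mu_self hE, ← e₃_eq_vec3] using hR ω hω

/-- `‖γ - ω‖² = 2 (1 - μ) ≤ 2 (1 - μ²) = 4 (t - E) / (t (E + 2))`. -/
lemma norm_gam_sub_le (hR : ∀ ω : E3, ‖ω‖ = 1 → R ω e₃ = ω) (hE : 0 < E) (hEt : E ≤ t)
    (hω : ‖ω‖ = 1) : ‖gam R t E ω s - ω‖ ≤ √(2 / E) * √(t - E) := by
  have ht : 0 < t := hE.trans_le hEt
  have hμ1 : mu t E ≤ 1 := mu_le_one hE hEt
  have hμ0 : 0 ≤ mu t E := Real.sqrt_nonneg _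
  have hsq : 2 * (1 - mu t E) ≤ 2 / E * (t - E) := by
    have h2E : 2 * E ≤ t * (E + 2) := by nlinarith
    calc 2 * (1 - mu t E) ≤ 2 * (1 - mu t E ^ 2) := by nlinarith
      _ = 2 * (2 * (t - E) / (t * (E + 2))) := by rw [one_sub_mu_sq ht hE]
      _ ≤ 2 * (2 * (t - E) / (2 * E)) := by gcongr
      _ = 2 / E * (t - E) := by field_simp
  have hnorm : ‖gam R t E ω s - ω‖ = √(2 * (1 - mu t E)) := by
    nth_rw 2 [← hR ω hω]
    rw [gam, ← (R ω).map_sub, (R ω).norm_map, e₃_eq_vec3, vec3_sub, norm_vec3, sub_zero,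
      sub_zero, mul_pow, mul_pow, Real.sq_sqrt (by nlinarith), ← mul_add, Real.cos_sq_add_sin_sq]
    ring_nf
  rw [hnorm, ← Real.sqrt_mul (by positivity)]
  exact Real.sqrt_le_sqrt hsq

variable (R)

lemma continuousOn_gam (hE : 0 < E) :
    ContinuousOn (fun p : ℝ × ℝ => gam R p.1 E ω p.2) (Ioi 0 ×ˢ univ) := by
  have hμ : ContinuousOn (fun p : ℝ × ℝ => mu p.1 E) (Ioi 0 ×ˢ univ) :=
    (continuousOn_mu hE).comp continuousOn_fst fun p hp => hp.1
  have hr : ContinuousOn (fun p : ℝ × ℝ => √(1 - mu p.1 E ^ 2)) (Ioi 0 ×ˢ univ) :=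
    Real.continuous_sqrt.comp_continuousOn (continuousOn_const.sub (hμ.pow 2))
  exact (R ω).continuous.comp_continuousOn <|
    (hr.mul (by fun_prop)).vec3 (hr.mul (by fun_prop)) hμ

end gam

/-- The inner integral of `K_{1,1,κ}ψ` at `x`, with `φ = ψ x` and `t` in the role of `E'`. -/
def gamIntegral (R : E3 → (E3 ≃ₗᵢ[ℝ] E3)) (φ : E3 → ℝ → ℝ) (E : ℝ) (ω : E3) (t : ℝ) : ℝ :=
  ∫ s in (0 : ℝ)..2 * π, φ (gam R t E ω s) t

section gamIntegral

variable {R : E3 → (E3 ≃ₗᵢ[ℝ] E3)} {φ : E3 → ℝ → ℝ} {σ : ℝ → ℝ} {E t M H Lσ S : ℝ} {ω : E3}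

lemma gamIntegral_self (hR : ∀ ω : E3, ‖ω‖ = 1 → R ω e₃ = ω) (hE : 0 < E) (hω : ‖ω‖ = 1) :
    gamIntegral R φ E ω E = 2 * π * φ ω E := by
  simp [gamIntegral, gam_self ω _ hR hE hω]

lemma abs_gamIntegral_le (hE : 0 < E) (hEt : E ≤ t)
    (hM : ∀ ω' ∈ sphere (0 : E3) 1, |φ ω' t| ≤ M) : |gamIntegral R φ E ω t| ≤ 2 * π * M := by
  have := intervalIntegral.norm_integral_le_of_norm_le_const (a := 0) (b := 2 * π)
    (f := fun s => φ (gam R t E ω s) t)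
    fun s _ => hM _ (mem_sphere_zero_iff_norm.mpr (norm_gam R ω s hE hEt))
  rwa [sub_zero, abs_of_pos Real.two_pi_pos, mul_comm M] at this

lemma abs_gamIntegral_sub_le (hR : ∀ ω : E3, ‖ω‖ = 1 → R ω e₃ = ω) (hE : 0 < E) (hEt : E ≤ t)
    (hω : ‖ω‖ = 1) (hφ : ContinuousOn (φ · t) (sphere 0 1)) (hH0 : 0 ≤ H)
    (hH : ∀ ω' ∈ sphere (0 : E3) 1, |φ ω' t - φ ω E| ≤ H * (‖ω' - ω‖ + |t - E|)) :
    |gamIntegral R φ E ω t - 2 * π * φ ω E| ≤ 2 * π * (H * (√(2 / E) * √(t - E) + (t - E))) := by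
  have hsphere (s : ℝ) : gam R t E ω s ∈ sphere (0 : E3) 1 :=
    mem_sphere_zero_iff_norm.mpr (norm_gam R ω s hE hEt)
  have hcont : Continuous fun s => φ (gam R t E ω s) t :=
    hφ.comp_continuous ((continuousOn_gam R ω hE).comp_continuous (f := fun s => (t, s))
      (by fun_prop) fun s => ⟨hE.trans_le hEt, trivial⟩) hsphere
  have hpoint (s : ℝ) : ‖φ (gam R t E ω s) t - φ ω E‖ ≤ H * (√(2 / E) * √(t - E) + (t - E)) := by
    refine (hH _ (hsphere s)).trans (mul_le_mul_of_nonneg_left ?_ hH0)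
    rw [abs_of_nonneg (sub_nonneg.mpr hEt)]
    gcongr
    exact norm_gam_sub_le ω s hR hE hEt hω
  have hint := intervalIntegral.norm_integral_le_of_norm_le_const (a := 0) (b := 2 * π)
    (f := fun s => φ (gam R t E ω s) t - φ ω E) fun s _ => hpoint s
  rw [intervalIntegral.integral_sub (hcont.intervalIntegrable _ _) intervalIntegrable_const,
    intervalIntegral.integral_const, sub_zero, smul_eq_mul, abs_of_pos Real.two_pi_pos,
    mul_comm _ (2 * π)] at hint
  exact hint

lemma continuousOn_gamIntegral {b : ℝ} (hE : 0 < E)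
    (hφ : ContinuousOn (fun p : E3 × ℝ => φ p.1 p.2) (sphere 0 1 ×ˢ Icc E b)) :
    ContinuousOn (gamIntegral R φ E ω) (Icc E b) := by
  rw [continuousOn_iff_continuous_domRestrict]
  refine intervalIntegral.continuous_parametric_intervalIntegral_of_continuous'
    (f := fun (t : Icc E b) s => φ (gam R t E ω s) t) ?_ 0 (2 * π)
  have hgam : Continuous fun p : Icc E b × ℝ => gam R p.1 E ω p.2 :=
    (continuousOn_gam R ω hE).comp_continuous (f := fun p : Icc E b × ℝ => ((p.1 : ℝ), p.2))
      (by fun_prop) fun p => ⟨hE.trans_le p.1.2.1, trivial⟩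
  exact hφ.comp_continuous (hgam.prodMk (by fun_prop)) fun p =>
    ⟨mem_sphere_zero_iff_norm.mpr (norm_gam R ω p.2 hE p.1.2.1), p.1.2⟩

lemma abs_mul_gamIntegral_sub_le (hR : ∀ ω : E3, ‖ω‖ = 1 → R ω e₃ = ω) (hE : 0 < E)
    (hEt : E ≤ t) (hω : ‖ω‖ = 1) (hσ : |σ t - σ E| ≤ Lσ * (t - E)) (hσE : |σ E| ≤ S)
    (hφ : ContinuousOn (φ · t) (sphere 0 1)) (hM : ∀ ω' ∈ sphere (0 : E3) 1, |φ ω' t| ≤ M)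
    (hH0 : 0 ≤ H) (hH : ∀ ω' ∈ sphere (0 : E3) 1, |φ ω' t - φ ω E| ≤ H * (‖ω' - ω‖ + |t - E|)) :
    |σ t * gamIntegral R φ E ω t - σ E * gamIntegral R φ E ω E|
      ≤ (M + H) * (2 * π * (Lσ + S)) * (t - E) + (M + H) * (2 * π * S) * √(2 / E) * √(t - E) := by
  have hM0 : 0 ≤ M := (abs_nonneg _).trans (hM ω (mem_sphere_zero_iff_norm.mpr hω))
  have hS0 : 0 ≤ S := (abs_nonneg _).trans hσE
  have hLσ : 0 ≤ Lσ * (t - E) := (abs_nonneg _).trans hσ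
  have hΦ := abs_gamIntegral_le (R := R) (ω := ω) hE hEt hM
  have hΦsub := abs_gamIntegral_sub_le hR hE hEt hω hφ hH0 hH
  rw [gamIntegral_self hR hE hω]
  set Φ := gamIntegral R φ E ω t
  calc |σ t * Φ - σ E * (2 * π * φ ω E)|
      = |(σ t - σ E) * Φ + σ E * (Φ - 2 * π * φ ω E)| := by ring_nf
    _ ≤ |σ t - σ E| * |Φ| + |σ E| * |Φ - 2 * π * φ ω E| := by
        rw [← abs_mul, ← abs_mul]; exact abs_add_le _ _
    _ ≤ Lσ * (t - E) * (2 * π * M) + S * (2 * π * (H * (√(2 / E) * √(t - E) + (t - E)))) := by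
        gcongr
    _ ≤ _ := by
        have hπ := Real.pi_pos.le
        have hr : 0 ≤ √(2 / E) * √(t - E) := by positivity
        nlinarith [mul_nonneg (mul_nonneg hπ hLσ) hH0,
          mul_nonneg (mul_nonneg (mul_nonneg hπ hS0) (sub_nonneg.mpr hEt)) hM0,
          mul_nonneg (mul_nonneg (mul_nonneg hπ hM0) hS0) hr]

theorem exists_hasPF1Upper_mul_gamIntegral {κ c : ℝ} (hR : ∀ ω : E3, ‖ω‖ = 1 → R ω e₃ = ω)
    (hE : 0 < E) (hκ : 1 < κ) (hκE : κ * E ≤ c) (hω : ‖ω‖ = 1)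
    (hσc : ContinuousOn σ (Icc E (κ * E)))
    (hσ : ∀ t ∈ Icc E (κ * E), |σ t - σ E| ≤ Lσ * (t - E)) (hσE : |σ E| ≤ S)
    (hφ : ContinuousOn (fun p : E3 × ℝ => φ p.1 p.2) (sphere 0 1 ×ˢ Icc E (κ * E)))
    (hM : ∀ ω' ∈ sphere (0 : E3) 1, ∀ t ∈ Icc E (κ * E), |φ ω' t| ≤ M)
    (hH : ∀ ω' ∈ sphere (0 : E3) 1, ∀ t ∈ Icc E (κ * E),
      |φ ω' t - φ ω E| ≤ H * (‖ω' - ω‖ + |t - E|)) :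
    ∃ L, HasPF1Upper (fun t => σ t * gamIntegral R φ E ω t) E (κ * E) L ∧
      |L - 2 * π * Real.log (κ * E - E) * σ E * φ ω E| ≤
        (2 * π * (Lσ + S) * c + 4 * π * S * √2) * (M + H) * √(κ - 1) := by
  have hEb : E < κ * E := by nlinarith
  have hb : κ * E ∈ Icc E (κ * E) := ⟨hEb.le, le_rfl⟩
  have hω' : ω ∈ sphere (0 : E3) 1 := mem_sphere_zero_iff_norm.mpr hω
  have hbE : 0 < |κ * E - E| := abs_pos.mpr (sub_pos.mpr hEb).ne'
  have hH0 : 0 ≤ H := by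
    have := (abs_nonneg _).trans (hH ω hω' _ hb)
    rw [sub_self, norm_zero, zero_add] at this
    exact nonneg_of_mul_nonneg_left this hbE
  have hLσ : 0 ≤ Lσ :=
    nonneg_of_mul_nonneg_left ((abs_nonneg _).trans (hσ _ hb)) (sub_pos.mpr hEb)
  have hM0 : 0 ≤ M := (abs_nonneg _).trans (hM ω hω' E ⟨le_rfl, hEb.le⟩)
  have hS0 : 0 ≤ S := (abs_nonneg _).trans hσE
  obtain ⟨L, hL, hLE⟩ := exists_hasPF1Upper_abs_sub_log_le
    (g := fun t => σ t * gamIntegral R φ E ω t) hEb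
    (hσc.mul (continuousOn_gamIntegral hE hφ)) fun t ht =>
      abs_mul_gamIntegral_sub_le hR hE ht.1.le hω (hσ t (Ioc_subset_Icc_self ht)) hσE
        (hφ.comp (continuousOn_id.prodMk continuousOn_const) fun ω' hω' =>
          ⟨hω', Ioc_subset_Icc_self ht⟩)
        (fun ω' hω' => hM ω' hω' t (Ioc_subset_Icc_self ht)) hH0
        (fun ω' hω' => hH ω' hω' t (Ioc_subset_Icc_self ht))
  refine ⟨L, hL, ?_⟩
  rw [gamIntegral_self hR hE hω, show σ E * (2 * π * φ ω E) * Real.log (κ * E - E) =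
    2 * π * Real.log (κ * E - E) * σ E * φ ω E by ring] at hLE
  exact hLE.trans ((mul_sub_add_sqrt_le hE hκ.le hκE (by positivity)).trans_eq (by ring))

end gamIntegral

theorem stmt18_general (G : Set E3) (hGbdd : Bornology.IsBounded G)
    (E₀ Em : ℝ) (hE₀ : 0 < E₀) (hI : E₀ < Em)
    (σ₁ : E3 → ℝ → ℝ → ℝ)
    (hσc : ContinuousOn (fun p : E3 × ℝ × ℝ => σ₁ p.1 p.2.1 p.2.2)
      (closure G ×ˢ Set.Icc E₀ Em ×ˢ Set.Icc E₀ Em))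
    (hσcd : ∀ x ∈ closure G, ContDiffOn ℝ 1 (fun q : ℝ × ℝ => σ₁ x q.1 q.2)
      (Set.Icc E₀ Em ×ˢ Set.Icc E₀ Em))
    (hσdc : ∀ i : ℕ, i ≤ 1 → ContinuousOn (fun p : E3 × ℝ × ℝ =>
      iteratedFDerivWithin ℝ i (fun q : ℝ × ℝ => σ₁ p.1 q.1 q.2)
        (Set.Icc E₀ Em ×ˢ Set.Icc E₀ Em) (p.2.1, p.2.2))
      (closure G ×ˢ Set.Icc E₀ Em ×ˢ Set.Icc E₀ Em))
    (R : E3 → (E3 ≃ₗᵢ[ℝ] E3)) (hR : ∀ ω : E3, ‖ω‖ = 1 → R ω e₃ = ω) :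
    ∃ C : ℝ, ∀ (ψ : E3 → E3 → ℝ → ℝ) (M H : ℝ),
      ContinuousOn (fun p : E3 × E3 × ℝ => ψ p.1 p.2.1 p.2.2)
        (closure G ×ˢ sphere (0 : E3) 1 ×ˢ Set.Icc E₀ Em) →
      (∀ x ∈ closure G, ∀ ω ∈ sphere (0 : E3) 1, ∀ E ∈ Set.Icc E₀ Em, |ψ x ω E| ≤ M) →
      (∀ x ∈ closure G, ∀ ω₁ ∈ sphere (0 : E3) 1, ∀ E₁ ∈ Set.Icc E₀ Em,
        ∀ ω₂ ∈ sphere (0 : E3) 1, ∀ E₂ ∈ Set.Icc E₀ Em,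
        |ψ x ω₁ E₁ - ψ x ω₂ E₂| ≤ H * (‖ω₁ - ω₂‖ + |E₁ - E₂|)) →
      ∀ κ : ℝ, 1 < κ →
      ∀ x ∈ closure G, ∀ ω ∈ sphere (0 : E3) 1, ∀ E ∈ Set.Icc E₀ Em, κ * E ≤ Em →
        ∃ L : ℝ,
          HasPF1Upper
            (fun E' => σ₁ x E' E * ∫ s in (0:ℝ)..(2 * π), ψ x (gam R E' E ω s) E')
            E (κ * E) L ∧
          |L - 2 * π * Real.log (κ * E - E) * σ₁ x E E * ψ x ω E|
            ≤ C * (M + H) * (κ - 1) ^ (1/2 : ℝ) := by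
  have hK := hGbdd.isCompact_closure
  obtain ⟨S, hS⟩ := (hK.prod (isCompact_Icc.prod isCompact_Icc)).exists_bound_of_continuousOn hσc
  obtain ⟨Lσ, hLσ⟩ := exists_lipschitzOnWith_of_continuousOn_iteratedFDerivWithin
    (f := fun x q => σ₁ x q.1 q.2) hK (isCompact_Icc.prod isCompact_Icc)
    ((convex_Icc _ _).prod (convex_Icc _ _)) ((uniqueDiffOn_Icc hI).prod (uniqueDiffOn_Icc hI))
    (fun x hx => (hσcd x hx).differentiableOn one_ne_zero)
    (by simpa only [Prod.mk.eta] using hσdc 1 le_rfl)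
  refine ⟨2 * π * (Lσ + S) * Em + 4 * π * S * √2,
    fun ψ M H hψc hψM hψH κ hκ x hx ω hω E hE hκE => ?_⟩
  have hsub : Icc E (κ * E) ⊆ Icc E₀ Em := Icc_subset_Icc hE.1 hκE
  rw [← Real.sqrt_eq_rpow]
  exact exists_hasPF1Upper_mul_gamIntegral hR (hE₀.trans_le hE.1) hκ hκE
    (mem_sphere_zero_iff_norm.mp hω)
    (hσc.comp (f := fun t => (x, t, E)) (by fun_prop) fun t ht => ⟨hx, hsub ht, hE⟩)
    (fun t ht => by
      simpa [Real.dist_eq, Prod.dist_eq, abs_of_nonneg (sub_nonneg.mpr ht.1), ht.1]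
        using (hLσ x hx).dist_le_mul (t, E) ⟨hsub ht, hE⟩ (E, E) ⟨hE, hE⟩)
    (by simpa using hS (x, E, E) ⟨hx, hE, hE⟩)
    (hψc.comp (f := fun p : E3 × ℝ => (x, p)) (by fun_prop) fun p hp => ⟨hx, hp.1, hsub hp.2⟩)
    (fun ω' hω' t ht => hψM x hx ω' hω' t (hsub ht))
    (fun ω' hω' t ht => hψH x hx ω' hω' t (hsub ht) ω hω E hE)

/-- error estimate for the truncated first-order Hadamard operator
`(K_{1,1,κ}ψ)(x,ω,E) = p.f.∫_E^{κE} σ̂₁(x,E',E)(∫_0^{2π} ψ(x,γ(E',E,ω)(s),E') ds)/(E'−E) dE'`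
against its approximation `(K̃_{1,1,κ}ψ)(x,ω,E) = 2π·log(κE−E)·σ̂₁(x,E,E)·ψ(x,ω,E)`:
`|K_{1,1,κ}ψ − K̃_{1,1,κ}ψ| ≤ C·‖ψ‖·(κ−1)^{1/2}` with `C` independent of
`ψ, κ, x, ω, E` (here `‖ψ‖ ≤ M + H` with `M` a sup bound and `H` a uniform Lipschitz
constant in `(ω,E)`). -/
theorem stmt18 (G : Set E3) (hGopen : IsOpen G) (hGbdd : Bornology.IsBounded G)
    (E₀ Em : ℝ) (hE₀ : 0 < E₀) (hI : E₀ < Em)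
    (σ₁ : E3 → ℝ → ℝ → ℝ)
    (hσc : ContinuousOn (fun p : E3 × ℝ × ℝ => σ₁ p.1 p.2.1 p.2.2)
      (closure G ×ˢ Set.Icc E₀ Em ×ˢ Set.Icc E₀ Em))
    (hσcd : ∀ x ∈ closure G, ContDiffOn ℝ 1 (fun q : ℝ × ℝ => σ₁ x q.1 q.2)
      (Set.Icc E₀ Em ×ˢ Set.Icc E₀ Em))
    (hσdc : ∀ i : ℕ, i ≤ 1 → ContinuousOn (fun p : E3 × ℝ × ℝ =>
      iteratedFDerivWithin ℝ i (fun q : ℝ × ℝ => σ₁ p.1 q.1 q.2)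
        (Set.Icc E₀ Em ×ˢ Set.Icc E₀ Em) (p.2.1, p.2.2))
      (closure G ×ˢ Set.Icc E₀ Em ×ˢ Set.Icc E₀ Em))
    (R : E3 → (E3 ≃ₗᵢ[ℝ] E3)) (hR : ∀ ω : E3, ‖ω‖ = 1 → R ω e₃ = ω) :
    ∃ C : ℝ, ∀ (ψ : E3 → E3 → ℝ → ℝ) (M H : ℝ),
      ContinuousOn (fun p : E3 × E3 × ℝ => ψ p.1 p.2.1 p.2.2)
        (closure G ×ˢ sphere (0 : E3) 1 ×ˢ Set.Icc E₀ Em) →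
      (∀ x ∈ closure G, ∀ ω ∈ sphere (0 : E3) 1, ∀ E ∈ Set.Icc E₀ Em, |ψ x ω E| ≤ M) →
      (∀ x ∈ closure G, ∀ ω₁ ∈ sphere (0 : E3) 1, ∀ E₁ ∈ Set.Icc E₀ Em,
        ∀ ω₂ ∈ sphere (0 : E3) 1, ∀ E₂ ∈ Set.Icc E₀ Em,
        |ψ x ω₁ E₁ - ψ x ω₂ E₂| ≤ H * (‖ω₁ - ω₂‖ + |E₁ - E₂|)) →
      ∀ κ : ℝ, 1 < κ →
      ∀ x ∈ closure G, ∀ ω ∈ sphere (0 : E3) 1, ∀ E ∈ Set.Icc E₀ Em, κ * E ≤ Em →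
        ∃ L : ℝ,
          HasPF1Upper
            (fun E' => σ₁ x E' E * ∫ s in (0:ℝ)..(2 * π), ψ x (gam R E' E ω s) E')
            E (κ * E) L ∧
          |L - 2 * π * Real.log (κ * E - E) * σ₁ x E E * ψ x ω E|
            ≤ C * (M + H) * (κ - 1) ^ (1/2 : ℝ) :=
  stmt18_general G hGbdd E₀ Em hE₀ hI σ₁ hσc hσcd hσdc R hR
end
end
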